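/- If Q* is the fixed point of the MCRE operator Z^π, then the induced value function V*(s) := Q*(s,π(s)) satisfies the true Bellman equation V*(s) = r(s,π(s)) + γ𝔼_{s'∼P(·|s,π(s))}[V*(s')], provided υγ < 1 and I^π(s,π(s)) = 0 for all s; consequently V* equals the true value function V^π. -/

import Mathlib

/-- The true Bellman operator. -/
def TBell {S A : Type*} [Fintype S] (P : S → A → S → ℝ) (r : S → A → ℝ) (γ : ℝ)
    (π : S → A) (Q : S → A → ℝ) : S → A → ℝ :=
  fun s a => r s a + γ * ∑ s', P s a s' * Q s' (π s')

/-- The true TD Bellman operator: `H^π Q = T^π Q - γ(T^π Q - Q(·,π(·)))`. -/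
def Hop {S A : Type*} [Fintype S] (P : S → A → S → ℝ) (r : S → A → ℝ) (γ : ℝ)
    (π : S → A) (Q : S → A → ℝ) : S → A → ℝ :=
  fun s a => TBell P r γ π Q s a - γ * (TBell P r γ π Q s a - Q s (π s))

/-- The MCRE operator. -/
def Zop {S A : Type*} [Fintype S] (P : S → A → S → ℝ) (r : S → A → ℝ) (γ υ : ℝ)
    (I : S → A → ℝ) (π : S → A) (Q : S → A → ℝ) : S → A → ℝ :=
  fun s a => (1 - υ) * TBell P r γ π Q s a + υ * Hop P r γ π Q s a - γ * I s a

/-!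
At `a = π s` the behaviour-cloning term vanishes and `Z^π Q = (1 - υγ) T^π Q + υγ Q(·, π ·)`,
so a fixed point satisfies `(1 - υγ) (T^π Q* - Q*) = 0` on the policy's actions; since `υγ < 1`
this is the true Bellman equation. Its solution is unique because the policy's transition matrix
is stochastic, hence non-expansive in the sup norm, so the Bellman operator is a `γ`-contraction.
-/

open Finset

theorem Zop_apply {S A : Type*} [Fintype S] (P : S → A → S → ℝ) (r : S → A → ℝ) (γ υ : ℝ)
    (I : S → A → ℝ) (π : S → A) (Q : S → A → ℝ) (s : S) (a : A) :
    Zop P r γ υ I π Q s a =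
      (1 - υ * γ) * TBell P r γ π Q s a + υ * γ * Q s (π s) - γ * I s a := by
  simp only [Zop, Hop]
  ring

theorem TBell_eq_of_Zop_fixedPoint {S A : Type*} [Fintype S] {P : S → A → S → ℝ}
    {r : S → A → ℝ} {γ υ : ℝ} (hυγ : υ * γ < 1) {I : S → A → ℝ} {π : S → A} {s : S}
    (hIπ : I s (π s) = 0) {Q : S → A → ℝ} (hQ : Zop P r γ υ I π Q = Q) :
    TBell P r γ π Q s (π s) = Q s (π s) := by
  have h := congrFun (congrFun hQ s) (π s)
  rw [Zop_apply, hIπ] at h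
  have h' : (1 - υ * γ) * (TBell P r γ π Q s (π s) - Q s (π s)) = 0 := by linarith
  exact sub_eq_zero.mp ((mul_eq_zero.mp h').resolve_left (by linarith))

theorem norm_stochastic_average_le {S : Type*} [Fintype S] {K : S → S → ℝ}
    (hK0 : ∀ s s', 0 ≤ K s s') (hK1 : ∀ s, ∑ s', K s s' = 1) (D : S → ℝ) :
    ‖fun s => ∑ s', K s s' * D s'‖ ≤ ‖D‖ := by
  refine (pi_norm_le_iff_of_nonneg (norm_nonneg D)).mpr fun s => ?_
  calc ‖∑ s', K s s' * D s'‖ ≤ ∑ s', ‖K s s' * D s'‖ := norm_sum_le _ _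
    _ ≤ ∑ s', K s s' * ‖D‖ := by
        gcongr with s'
        rw [norm_mul, Real.norm_of_nonneg (hK0 s s')]
        exact mul_le_mul_of_nonneg_left (norm_le_pi_norm D s') (hK0 s s')
    _ = ‖D‖ := by rw [← sum_mul, hK1, one_mul]

theorem eq_zero_of_eq_discounted_stochastic {S : Type*} [Fintype S] {K : S → S → ℝ}
    (hK0 : ∀ s s', 0 ≤ K s s') (hK1 : ∀ s, ∑ s', K s s' = 1) {γ : ℝ} (hγ0 : 0 ≤ γ)
    (hγ1 : γ < 1) {D : S → ℝ} (hD : ∀ s, D s = γ * ∑ s', K s s' * D s') : D = 0 := by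
  have hD' : D = γ • fun s => ∑ s', K s s' * D s' := funext hD
  have hle : ‖D‖ ≤ γ * ‖D‖ :=
    calc ‖D‖ = γ * ‖fun s => ∑ s', K s s' * D s'‖ := by
          conv_lhs => rw [hD']
          rw [norm_smul, Real.norm_of_nonneg hγ0]
      _ ≤ γ * ‖D‖ := mul_le_mul_of_nonneg_left (norm_stochastic_average_le hK0 hK1 D) hγ0
  exact norm_eq_zero.mp (le_antisymm (by nlinarith [norm_nonneg D]) (norm_nonneg D))

theorem bellman_solution_unique {S : Type*} [Fintype S] {K : S → S → ℝ}
    (hK0 : ∀ s s', 0 ≤ K s s') (hK1 : ∀ s, ∑ s', K s s' = 1) {γ : ℝ} (hγ0 : 0 ≤ γ)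
    (hγ1 : γ < 1) {c V W : S → ℝ} (hV : ∀ s, V s = c s + γ * ∑ s', K s s' * V s')
    (hW : ∀ s, W s = c s + γ * ∑ s', K s s' * W s') : V = W := by
  have hdiff : ∀ s, (V - W) s = γ * ∑ s', K s s' * (V - W) s' := fun s => by
    simp only [Pi.sub_apply, mul_sub, sum_sub_distrib]
    rw [hV s, hW s]
    ring
  exact sub_eq_zero.mp (eq_zero_of_eq_discounted_stochastic hK0 hK1 hγ0 hγ1 hdiff)

theorem mcre_fixedPoint_value_exact_general
    {S A : Type*} [Fintype S]
    (P : S → A → S → ℝ) (hP0 : ∀ s a s', 0 ≤ P s a s')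
    (hP1 : ∀ s a, ∑ s', P s a s' = 1)
    (r : S → A → ℝ) (γ υ : ℝ) (hγ0 : 0 ≤ γ) (hγ1 : γ < 1)
    (hυγ : υ * γ < 1)
    (I : S → A → ℝ) (π : S → A) (hIπ : ∀ s, I s (π s) = 0)
    (Qstar : S → A → ℝ) (hQstar : Zop P r γ υ I π Qstar = Qstar) :
    (∀ s, Qstar s (π s) =
        r s (π s) + γ * ∑ s', P s (π s) s' * Qstar s' (π s')) ∧
    ∀ V : S → ℝ, (∀ s, V s = r s (π s) + γ * ∑ s', P s (π s) s' * V s') →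
      (fun s => Qstar s (π s)) = V := by
  have hbellman : ∀ s, Qstar s (π s) =
      r s (π s) + γ * ∑ s', P s (π s) s' * Qstar s' (π s') := fun s =>
    (TBell_eq_of_Zop_fixedPoint hυγ (hIπ s) hQstar).symm
  exact ⟨hbellman, fun V hV =>
    bellman_solution_unique (fun s => hP0 s (π s)) (fun s => hP1 s (π s)) hγ0 hγ1 hbellman hV⟩

/-- The value function induced by the MCRE fixed point satisfies the true Bellman
equation, and hence equals the true value function. -/
theorem mcre_fixedPoint_value_exact
    {S A : Type*} [Fintype S] [Fintype A] [Nonempty S] [Nonempty A]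
    (P : S → A → S → ℝ) (hP0 : ∀ s a s', 0 ≤ P s a s')
    (hP1 : ∀ s a, ∑ s', P s a s' = 1)
    (r : S → A → ℝ) (γ υ : ℝ) (hγ0 : 0 ≤ γ) (hγ1 : γ < 1)
    (hυ0 : 0 ≤ υ) (hυ1 : υ ≤ 1) (hυγ : υ * γ < 1)
    (I : S → A → ℝ) (π : S → A) (hIπ : ∀ s, I s (π s) = 0)
    (Qstar : S → A → ℝ) (hQstar : Zop P r γ υ I π Qstar = Qstar) :
    (∀ s, Qstar s (π s) =
        r s (π s) + γ * ∑ s', P s (π s) s' * Qstar s' (π s')) ∧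
    ∀ V : S → ℝ, (∀ s, V s = r s (π s) + γ * ∑ s', P s (π s) s' * V s') →
      (fun s => Qstar s (π s)) = V :=
  mcre_fixedPoint_value_exact_general P hP0 hP1 r γ υ hγ0 hγ1 hυγ I π hIπ Qstar hQstar
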